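/- Let a, d, k be positive integers with gcd(a, d) = 1 and 2 ≤ k ≤ a − 1, let S = ⟨a, a+d, …, a+kd⟩, and write a = q k + r with 0 ≤ r < k. Suppose r ≥ 2. Then for every integer x ∉ {0, a, a + kd, a + (a + kd)}: μ_S(x) = μ_S(x − (q+1)(a+kd)) + ∑_{i=1}^{r−1} μ_S(x − (a+id) − (q+1)(a+kd)) + ∑_{i=r}^{k−1} μ_S(x − (a+id) − q(a+kd)) − ∑_{i=1}^{k−1} μ_S(x − (a+id)). -/

import Mathlib

open Classical in
/-- The Möbius function of the locally finite poset `(ℤ, ≤_S)` where `x ≤_S y ↔ y - x ∈ S`. -/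
noncomputable def mobius2 (S : Set ℤ) (a b : ℤ) : ℤ :=
  if a = b then 1
  else if b - a ∈ S then
    - ∑ c ∈ (Finset.Ico a b).attach,
        (if ((c : ℤ) - a ∈ S ∧ b - (c : ℤ) ∈ S) then mobius2 S a (c : ℤ) else 0)
  else 0
termination_by (b - a).toNat
decreasing_by
  have := c.2
  rw [Finset.mem_Ico] at this
  omega

/-- The reduced Möbius function `μ_S(x) = μ_S(0, x)`. -/
noncomputable def mobiusRed (S : Set ℤ) (x : ℤ) : ℤ := mobius2 S 0 x

open Classical in
lemma mobiusRed_def (S : Set ℤ) (y : ℤ) :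
    mobiusRed S y = if y = 0 then 1
      else if y ∈ S then
        -∑ c ∈ Finset.Ico 0 y, (if (c ∈ S ∧ y - c ∈ S) then mobiusRed S c else 0)
      else 0 := by
  rw [mobiusRed, mobius2]
  simp only [sub_zero]
  rw [Finset.sum_attach (Finset.Ico 0 y) (fun z => if (z ∈ S ∧ y - z ∈ S) then mobius2 S 0 z else 0)]
  simp only [eq_comm, mobiusRed]

lemma mobiusRed_zero (S : Set ℤ) : mobiusRed S 0 = 1 := by
  rw [mobiusRed_def]; simp

lemma mobiusRed_eq_zero (S : Set ℤ) {y : ℤ} (h1 : y ≠ 0) (h2 : y ∉ S) : mobiusRed S y = 0 := by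
  classical
  rw [mobiusRed_def, if_neg h1, if_neg h2]

open Classical in
lemma mobiusRed_rec (S : Set ℤ) {y : ℤ} (h1 : y ≠ 0) (h2 : y ∈ S) :
    mobiusRed S y = -∑ c ∈ Finset.Ico 0 y, (if (c ∈ S ∧ y - c ∈ S) then mobiusRed S c else 0) := by
  rw [mobiusRed_def, if_neg h1, if_pos h2]

/-- `w j = ⌈j/k⌉ a + j d`. -/
def wj (a d k j : ℕ) : ℤ := (((j + k - 1) / k : ℕ) : ℤ) * (a : ℤ) + (j : ℤ) * (d : ℤ)

lemma le_ceil_mul {k : ℕ} (hk : 0 < k) (j : ℕ) : j ≤ ((j + k - 1) / k) * k := by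
  have h1 := Nat.div_add_mod (j + k - 1) k
  have h2 : (j + k - 1) % k < k := Nat.mod_lt _ hk
  rw [mul_comm]
  generalize k * ((j + k - 1) / k) = K at h1 ⊢
  generalize (j + k - 1) % k = e at h1 h2
  omega

lemma wdiv_helper {k : ℕ} (hk : 0 < k) (c i : ℕ) (h1 : 1 ≤ i) (h2 : i ≤ k) :
    (c * k + i + k - 1) / k = c + 1 := by
  apply Nat.div_eq_of_lt_le
  · rw [Nat.add_mul, one_mul]
    generalize c * k = m
    omega
  · rw [Nat.add_mul, one_mul, Nat.add_mul, one_mul]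
    generalize c * k = m
    omega

lemma w_val {k : ℕ} (a d : ℕ) (hk : 0 < k) (c i : ℕ) (h1 : 1 ≤ i) (h2 : i ≤ k) :
    wj a d k (c * k + i) = ((c : ℤ) + 1) * (a : ℤ) + ((c : ℤ) * (k : ℤ) + (i : ℤ)) * (d : ℤ) := by
  rw [wj, wdiv_helper hk c i h1 h2]
  push_cast
  ring

lemma w_zero (a d k : ℕ) (hk : 0 < k) : wj a d k 0 = 0 := by
  rw [wj, Nat.div_eq_of_lt (by omega)]
  simp

lemma w_small (a d k : ℕ) (hk : 0 < k) {i : ℕ} (h1 : 1 ≤ i) (h2 : i ≤ k) :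
    wj a d k i = (a : ℤ) + (i : ℤ) * (d : ℤ) := by
  have h := w_val a d hk 0 i h1 h2
  simpa using h

lemma w_add (a d k : ℕ) (hk : 0 < k) (j : ℕ) :
    wj a d k (j + k) = wj a d k j + ((a : ℤ) + (k : ℤ) * (d : ℤ)) := by
  rw [wj, wj, show j + k + k - 1 = (j + k - 1) + k by omega, Nat.add_div_right _ hk]
  push_cast
  ring

lemma w_nonneg (a d k j : ℕ) : 0 ≤ wj a d k j := by
  rw [wj]; positivity

section Semigroup

variable {a d k : ℕ} {S : Set ℤ}

def SGood (a d k : ℕ) (S : Set ℤ) : Prop :=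
  S = {z : ℤ | ∃ c : Fin (k + 1) → ℕ,
      z = ∑ i, (c i : ℤ) * ((a : ℤ) + (i : ℕ) * (d : ℤ))}

lemma memS_gen (hS : SGood a d k S) {i : ℕ} (hi : i ≤ k) : ((a : ℤ) + (i : ℤ) * (d : ℤ)) ∈ S := by
  classical
  rw [hS]
  have hik : i < k + 1 := by omega
  refine ⟨fun j => if j = ⟨i, hik⟩ then 1 else 0, ?_⟩
  rw [Finset.sum_eq_single (⟨i, hik⟩ : Fin (k + 1))]
  · simp
  · intro b _ hb; simp [hb]
  · simp

lemma memS_add (hS : SGood a d k S) {u v : ℤ} (hu : u ∈ S) (hv : v ∈ S) : u + v ∈ S := by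
  rw [hS] at hu hv ⊢
  obtain ⟨c1, rfl⟩ := hu
  obtain ⟨c2, rfl⟩ := hv
  refine ⟨fun j => c1 j + c2 j, ?_⟩
  rw [← Finset.sum_add_distrib]
  refine Finset.sum_congr rfl fun j _ => ?_
  push_cast
  ring

lemma memS_iff (hk : 0 < k) (hS : SGood a d k S) (z : ℤ) :
    z ∈ S ↔ ∃ s t : ℕ, z = (s : ℤ) * (a : ℤ) + (t : ℤ) * (d : ℤ) ∧ t ≤ s * k := by
  constructor
  · intro hz
    rw [hS] at hz
    obtain ⟨c, rfl⟩ := hz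
    refine ⟨∑ i, c i, ∑ i : Fin (k + 1), (i : ℕ) * c i, ?_, ?_⟩
    · push_cast
      rw [Finset.sum_mul, Finset.sum_mul, ← Finset.sum_add_distrib]
      refine Finset.sum_congr rfl fun j _ => ?_
      ring
    · calc ∑ i : Fin (k+1), (i : ℕ) * c i ≤ ∑ i : Fin (k+1), k * c i :=
            Finset.sum_le_sum fun j _ => Nat.mul_le_mul_right _ (Nat.le_of_lt_succ j.isLt)
        _ = (∑ i, c i) * k := by rw [← Finset.mul_sum, Nat.mul_comm]
  · rintro ⟨s, t, rfl, ht⟩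
    induction s generalizing t with
    | zero =>
      have ht0 : t = 0 := by omega
      subst ht0
      rw [hS]
      exact ⟨0, by simp⟩
    | succ n ih =>
      rw [Nat.succ_mul] at ht
      rcases le_or_gt t k with h | h
      · have h3 := memS_add hS (memS_gen hS h) (ih 0 (Nat.zero_le _))
        convert h3 using 1
        push_cast
        ring
      · have h3 := memS_add hS (memS_gen hS (le_refl k))
          (ih (t - k) (Nat.sub_le_iff_le_add.mpr ht))
        convert h3 using 1
        push_cast [Nat.cast_sub h.le]
        ring

end Semigroup

section Apery

variable {a d k : ℕ} {S : Set ℤ}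

lemma memS_zero (hk : 0 < k) (hS : SGood a d k S) : (0:ℤ) ∈ S :=
  (memS_iff hk hS 0).mpr ⟨0, 0, by simp, by simp⟩

lemma memS_nonneg (hk : 0 < k) (hS : SGood a d k S) {z : ℤ} (hz : z ∈ S) : 0 ≤ z := by
  obtain ⟨s, t, rfl, _⟩ := (memS_iff hk hS z).mp hz
  positivity

lemma w_add_mul_mem (hk : 0 < k) (hS : SGood a d k S) (j c : ℕ) :
    wj a d k j + (c : ℤ) * (a : ℤ) ∈ S := by
  refine (memS_iff hk hS _).mpr ⟨(j + k - 1) / k + c, j, ?_, ?_⟩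
  · rw [wj]; push_cast; ring
  · exact le_trans (le_ceil_mul hk j) (Nat.mul_le_mul_right _ (Nat.le_add_right _ c))

lemma w_mem (hk : 0 < k) (hS : SGood a d k S) (j : ℕ) : wj a d k j ∈ S := by
  have := w_add_mul_mem hk hS j 0
  simpa using this

lemma apery_mem (ha : 0 < a) (hk : 0 < k) (hS : SGood a d k S) {n : ℤ}
    (hn : n ∈ S) (hna : n - (a:ℤ) ∉ S) : ∃ j : ℕ, j < a ∧ n = wj a d k j := by
  obtain ⟨s, t, rfl, ht⟩ := (memS_iff hk hS n).mp hn
  set j := t % a with hj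
  have hja : j < a := Nat.mod_lt _ ha
  set cj := (j + k - 1) / k with hcj
  have hj_le : j ≤ s * k := le_trans (Nat.mod_le t a) ht
  have hcjs : cj ≤ s := by
    have h1 : cj < s + 1 := by
      apply (Nat.div_lt_iff_lt_mul hk).mpr
      rw [Nat.add_mul, one_mul]
      generalize s * k = m at hj_le ⊢
      omega
    omega
  have hle : cj ≤ s + (t / a) * d := le_trans hcjs (Nat.le_add_right _ _)
  have hm2 : ((s + (t / a) * d - cj : ℕ) : ℤ) = (s:ℤ) + ((t/a : ℕ):ℤ) * (d:ℤ) - (cj:ℤ) := by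
    push_cast [Nat.cast_sub hle]; ring
  have htz : (t:ℤ) = (a:ℤ) * ((t/a : ℕ):ℤ) + (j:ℤ) := by
    exact_mod_cast (Nat.div_add_mod t a).symm
  have hkey : (s:ℤ) * (a:ℤ) + (t:ℤ) * (d:ℤ)
      = wj a d k j + ((s + (t / a) * d - cj : ℕ):ℤ) * (a:ℤ) := by
    rw [hm2, wj, ← hcj]
    linear_combination (d:ℤ) * htz
  rcases Nat.eq_zero_or_pos (s + (t / a) * d - cj) with h0 | h0
  · refine ⟨j, hja, ?_⟩
    rw [hkey, h0]
    push_cast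
    ring
  · exfalso
    apply hna
    have hsub : ((s + (t / a) * d - cj : ℕ):ℤ) = ((s + (t / a) * d - cj - 1 : ℕ):ℤ) + 1 := by
      push_cast [Nat.cast_sub h0]
      ring
    have hfin : (s:ℤ) * (a:ℤ) + (t:ℤ) * (d:ℤ) - (a:ℤ)
        = wj a d k j + ((s + (t/a) * d - cj - 1 : ℕ):ℤ) * (a:ℤ) := by
      rw [hkey, hsub]; ring
    rw [hfin]
    exact w_add_mul_mem hk hS j _

lemma apery_not (ha : 0 < a) (hd : 0 < d) (hk : 0 < k) (hgcd : Nat.gcd a d = 1)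
    (hS : SGood a d k S) {j : ℕ} (hja : j < a) : wj a d k j - (a:ℤ) ∉ S := by
  intro hmem
  obtain ⟨s, t, heq, ht⟩ := (memS_iff hk hS _).mp hmem
  set cj := (j + k - 1) / k with hcj
  rw [wj, ← hcj] at heq
  have hdvd : (a:ℤ) ∣ (d:ℤ) * ((t:ℤ) - (j:ℤ)) :=
    ⟨(cj:ℤ) - 1 - (s:ℤ), by linear_combination (-1 : ℤ) * heq⟩
  have hgcdz : Int.gcd (a:ℤ) (d:ℤ) = 1 := by
    rw [Int.gcd_natCast_natCast]; exact hgcd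
  obtain ⟨e, he⟩ := Int.dvd_of_dvd_mul_right_of_gcd_one hdvd hgcdz
  have hes : (cj:ℤ) - 1 - (s:ℤ) = e * (d:ℤ) := by
    have hcan : ((cj:ℤ) - 1 - (s:ℤ)) * (a:ℤ) = (e * (d:ℤ)) * (a:ℤ) := by
      linear_combination heq + (d:ℤ) * he
    exact mul_right_cancel₀ (by exact_mod_cast Nat.pos_iff_ne_zero.mp ha) hcan
  have h7 : (cj:ℤ) * (k:ℤ) ≤ (j:ℤ) + (k:ℤ) - 1 := by
    have h : cj * k ≤ j + k - 1 := by rw [hcj]; exact Nat.div_mul_le_self _ _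
    have h1k : 1 ≤ j + k := by omega
    have h' := (Nat.cast_le (α := ℤ)).mpr h
    rw [Nat.cast_mul, Nat.cast_sub h1k, Nat.cast_add] at h'
    exact h'
  have h8 : (j:ℤ) ≤ (cj:ℤ) * (k:ℤ) := by
    have h : j ≤ cj * k := by rw [hcj]; exact le_ceil_mul hk j
    exact_mod_cast h
  have htz : (t:ℤ) ≤ (s:ℤ) * (k:ℤ) := by exact_mod_cast ht
  have htnn : (0:ℤ) ≤ (t:ℤ) := Int.natCast_nonneg t
  have hjz : (j:ℤ) < (a:ℤ) := by exact_mod_cast hja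
  have haz1 : (1:ℤ) ≤ (a:ℤ) := by exact_mod_cast ha
  have hkz1 : (1:ℤ) ≤ (k:ℤ) := by exact_mod_cast hk
  rcases lt_trichotomy e 0 with he0 | he0 | he0
  · have h1 : (a:ℤ) * e ≤ (a:ℤ) * (-1) :=
      mul_le_mul_of_nonneg_left (by omega) (by positivity)
    linarith [he]
  · rw [he0] at he hes
    have hsk : (s:ℤ) * (k:ℤ) = (cj:ℤ) * (k:ℤ) - (k:ℤ) := by
      have hs : (s:ℤ) = (cj:ℤ) - 1 := by linarith [hes]
      rw [hs]; ring
    have htj : (t:ℤ) = (j:ℤ) := by linarith [he]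
    linarith
  · have he1 : (1:ℤ) ≤ e := by omega
    have hae : (a:ℤ) * 1 ≤ (a:ℤ) * e := mul_le_mul_of_nonneg_left he1 (by positivity)
    have hsk : (s:ℤ) * (k:ℤ) = (cj:ℤ) * (k:ℤ) - (k:ℤ) - e * ((d:ℤ) * (k:ℤ)) := by
      have hs : (s:ℤ) = (cj:ℤ) - 1 - e * (d:ℤ) := by linarith [hes]
      rw [hs]; ring
    have hedk : 0 ≤ e * ((d:ℤ) * (k:ℤ)) := mul_nonneg (by omega) (by positivity)
    linarith [he]

lemma w_inj (ha : 0 < a) (hgcd : Nat.gcd a d = 1) :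
    ∀ j1, j1 < a → ∀ j2, j2 < a → wj a d k j1 = wj a d k j2 → j1 = j2 := by
  intro j1 h1 j2 h2 heq
  rw [wj, wj] at heq
  have hdvd : (a:ℤ) ∣ (d:ℤ) * ((j2:ℤ) - (j1:ℤ)) :=
    ⟨(((j1 + k - 1)/k : ℕ):ℤ) - (((j2 + k - 1)/k : ℕ):ℤ), by linear_combination (-1:ℤ) * heq⟩
  have hgcdz : Int.gcd (a:ℤ) (d:ℤ) = 1 := by
    rw [Int.gcd_natCast_natCast]; exact hgcd
  obtain ⟨e, he⟩ := Int.dvd_of_dvd_mul_right_of_gcd_one hdvd hgcdz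
  have hj1 : (j1:ℤ) < (a:ℤ) := by exact_mod_cast h1
  have hj2 : (j2:ℤ) < (a:ℤ) := by exact_mod_cast h2
  have hn1 : (0:ℤ) ≤ (j1:ℤ) := Int.natCast_nonneg _
  have hn2 : (0:ℤ) ≤ (j2:ℤ) := Int.natCast_nonneg _
  have he0 : e = 0 := by
    rcases lt_trichotomy e 0 with h | h | h
    · have hb : (a:ℤ) * e ≤ (a:ℤ) * (-1) :=
        mul_le_mul_of_nonneg_left (by omega) (by positivity)
      linarith
    · exact h
    · have hb : (a:ℤ) * 1 ≤ (a:ℤ) * e :=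
        mul_le_mul_of_nonneg_left (by omega) (by positivity)
      linarith
  have hfin : (j1:ℤ) = (j2:ℤ) := by
    rw [he0, mul_zero] at he
    linarith
  exact_mod_cast hfin

end Apery

section Conv

variable {a d k : ℕ} {S : Set ℤ}

open Classical in
lemma conv_sum (hk : 0 < k) (hS : SGood a d k S) (y : ℤ) :
    (∑ m ∈ Finset.Icc (0:ℤ) y, if m ∈ S then mobiusRed S (y - m) else 0)
      = if y = 0 then 1 else 0 := by
  have h0 : (0:ℤ) ∈ S := memS_zero hk hS
  rcases lt_trichotomy y 0 with hy | hy | hy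
  · rw [Finset.Icc_eq_empty (by omega), Finset.sum_empty, if_neg (by omega)]
  · subst hy
    rw [Finset.Icc_self, Finset.sum_singleton, if_pos h0, sub_zero, mobiusRed_zero, if_pos rfl]
  · rw [if_neg (by omega)]
    have hrefl : (∑ m ∈ Finset.Icc (0:ℤ) y, if m ∈ S then mobiusRed S (y - m) else 0)
        = ∑ c ∈ Finset.Icc (0:ℤ) y, if (y - c) ∈ S then mobiusRed S c else 0 := by
      refine Finset.sum_nbij' (fun m => y - m) (fun c => y - c) ?_ ?_ ?_ ?_ ?_
      · intro m hm; simp only [Finset.mem_Icc] at hm ⊢; omega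
      · intro m hm; simp only [Finset.mem_Icc] at hm ⊢; omega
      · intro m _; ring
      · intro m _; ring
      · intro m _; rw [sub_sub_cancel]
    rw [hrefl, ← Finset.Ico_insert_right (by omega : (0:ℤ) ≤ y),
      Finset.sum_insert (by simp), sub_self, if_pos h0]
    by_cases hyS : y ∈ S
    · have hcongr : (∑ c ∈ Finset.Ico (0:ℤ) y, if (y - c) ∈ S then mobiusRed S c else 0)
          = ∑ c ∈ Finset.Ico (0:ℤ) y, (if (c ∈ S ∧ y - c ∈ S) then mobiusRed S c else 0) := by
        refine Finset.sum_congr rfl fun c _ => ?_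
        by_cases hyc : y - c ∈ S
        · by_cases hc : c ∈ S
          · rw [if_pos hyc, if_pos ⟨hc, hyc⟩]
          · rw [if_pos hyc, if_neg (fun hh => hc hh.1),
              mobiusRed_eq_zero S (by rintro rfl; exact hc h0) hc]
        · rw [if_neg hyc, if_neg (fun hh => hyc hh.2)]
      rw [hcongr, mobiusRed_rec S (by omega) hyS]
      ring
    · rw [mobiusRed_eq_zero S (by omega) hyS, zero_add]
      refine Finset.sum_eq_zero fun c hc => ?_
      rw [Finset.mem_Ico] at hc
      by_cases hyc : y - c ∈ S
      · rw [if_pos hyc]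
        by_cases hcS : c ∈ S
        · exact absurd (by have := memS_add hS hcS hyc; simpa using this) hyS
        · exact mobiusRed_eq_zero S (by rintro rfl; exact hcS h0) hcS
      · rw [if_neg hyc]

open Classical in
lemma G_eq (ha : 0 < a) (hd : 0 < d) (hk : 0 < k) (hgcd : Nat.gcd a d = 1)
    (hS : SGood a d k S) (y : ℤ) :
    ∑ j ∈ Finset.range a, mobiusRed S (y - wj a d k j)
      = (if y = 0 then 1 else 0) - (if y = (a:ℤ) then 1 else 0) := by
  have h0 : (0:ℤ) ∈ S := memS_zero hk hS
  have hnn : ∀ z ∈ S, (0:ℤ) ≤ z := fun z hz => memS_nonneg hk hS hz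
  have haS : (a:ℤ) ∈ S := by
    have := memS_gen hS (Nat.zero_le k)
    simpa using this
  have h1 := conv_sum hk hS y
  have h2 := conv_sum hk hS (y - (a:ℤ))
  have e1 : (∑ m' ∈ Finset.Icc (0:ℤ) (y - (a:ℤ)), if m' ∈ S then mobiusRed S (y - (a:ℤ) - m') else 0)
      = ∑ m ∈ Finset.Icc (a:ℤ) y, if (m - (a:ℤ)) ∈ S then mobiusRed S (y - m) else 0 := by
    refine Finset.sum_nbij' (fun m => m + (a:ℤ)) (fun m => m - (a:ℤ)) ?_ ?_ ?_ ?_ ?_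
    · intro m hm; simp only [Finset.mem_Icc] at hm ⊢; omega
    · intro m hm; simp only [Finset.mem_Icc] at hm ⊢; omega
    · intro m _; ring
    · intro m _; ring
    · intro m _
      have hmm : y - (a:ℤ) - m = y - (m + (a:ℤ)) := by ring
      rw [add_sub_cancel_right, hmm]
  have e2 : (∑ m ∈ Finset.Icc (0:ℤ) y, if (m - (a:ℤ)) ∈ S then mobiusRed S (y - m) else 0)
      = if y = (a:ℤ) then 1 else 0 := by
    have hsub : Finset.Icc (a:ℤ) y ⊆ Finset.Icc (0:ℤ) y :=
      Finset.Icc_subset_Icc (by positivity) le_rfl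
    have hvan : ∀ m ∈ Finset.Icc (0:ℤ) y, m ∉ Finset.Icc (a:ℤ) y →
        (if (m - (a:ℤ)) ∈ S then mobiusRed S (y - m) else 0) = 0 := by
      intro m hm hm'
      rw [if_neg]
      intro hmem
      have h3 := hnn _ hmem
      rw [Finset.mem_Icc] at hm
      simp only [Finset.mem_Icc, not_and, not_le] at hm'
      omega
    rw [← Finset.sum_subset hsub hvan, ← e1, h2]
    simp [sub_eq_zero]
  have h3 : (∑ m ∈ Finset.Icc (0:ℤ) y,
      ((if m ∈ S then mobiusRed S (y - m) else 0)
        - (if (m - (a:ℤ)) ∈ S then mobiusRed S (y - m) else 0)))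
      = (if y = 0 then 1 else 0) - (if y = (a:ℤ) then 1 else 0) := by
    rw [Finset.sum_sub_distrib, h1, e2]
  classical
  set T : Finset ℤ := (Finset.range a).image (wj a d k) with hT
  have hmemT : ∀ m : ℤ, m ∈ T ↔ ∃ j, j < a ∧ m = wj a d k j := by
    intro m
    constructor
    · intro hm
      rw [hT, Finset.mem_image] at hm
      obtain ⟨j, hj, hje⟩ := hm
      exact ⟨j, Finset.mem_range.mp hj, hje.symm⟩
    · rintro ⟨j, hj, rfl⟩
      rw [hT, Finset.mem_image]
      exact ⟨j, Finset.mem_range.mpr hj, rfl⟩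
  have h4 : ∀ m ∈ Finset.Icc (0:ℤ) y,
      ((if m ∈ S then mobiusRed S (y - m) else 0)
        - (if (m - (a:ℤ)) ∈ S then mobiusRed S (y - m) else 0))
        = if m ∈ T then mobiusRed S (y - m) else 0 := by
    intro m _
    by_cases hm1 : m ∈ S
    · by_cases hm2 : (m - (a:ℤ)) ∈ S
      · rw [if_pos hm1, if_pos hm2, sub_self, if_neg]
        rw [hmemT]
        rintro ⟨j, hj, rfl⟩
        exact apery_not ha hd hk hgcd hS hj hm2
      · rw [if_pos hm1, if_neg hm2, sub_zero, if_pos]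
        rw [hmemT]
        exact apery_mem ha hk hS hm1 hm2
    · have hm2 : (m - (a:ℤ)) ∉ S := by
        intro h
        exact hm1 (by have := memS_add hS haS h; simpa using this)
      rw [if_neg hm1, if_neg hm2, sub_self, if_neg]
      rw [hmemT]
      rintro ⟨j, hj, rfl⟩
      exact hm1 (w_mem hk hS j)
  rw [Finset.sum_congr rfl h4, Finset.sum_ite_mem] at h3
  have h5 : (∑ m ∈ Finset.Icc (0:ℤ) y ∩ T, mobiusRed S (y - m))
      = ∑ m ∈ T, mobiusRed S (y - m) := by
    apply Finset.sum_subset Finset.inter_subset_right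
    intro m hmT hm
    have hm0 : 0 ≤ m := by
      rw [hT, Finset.mem_image] at hmT
      obtain ⟨j, _, rfl⟩ := hmT
      exact w_nonneg a d k j
    have hym : y < m := by
      by_contra hcon
      exact hm (Finset.mem_inter.mpr ⟨Finset.mem_Icc.mpr ⟨hm0, by omega⟩, hmT⟩)
    exact mobiusRed_eq_zero S (by omega) (fun h => by have := hnn _ h; omega)
  have h6 : (∑ m ∈ T, mobiusRed S (y - m))
      = ∑ j ∈ Finset.range a, mobiusRed S (y - wj a d k j) := by
    rw [hT]
    apply Finset.sum_image
    intro x1 hx1 x2 hx2 hx12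
    exact w_inj ha hgcd x1 (Finset.mem_range.mp hx1) x2 (Finset.mem_range.mp hx2) hx12
  rw [← h6, ← h5, h3]

end Conv

lemma Icc_sum_range (f : ℕ → ℤ) (m n : ℕ) :
    ∑ i ∈ Finset.Icc m n, f i = ∑ j ∈ Finset.range (n + 1 - m), f (m + j) := by
  rw [← Finset.Ico_add_one_right_eq_Icc, Finset.sum_Ico_eq_sum_range]

lemma sum_split_first (n : ℕ) (hn : 1 ≤ n) (G : ℕ → ℤ) :
    ∑ j ∈ Finset.range n, G j = G 0 + ∑ i ∈ Finset.Icc 1 (n-1), G i := by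
  have h := Finset.sum_range_succ' G (n - 1)
  rw [show n - 1 + 1 = n from by omega] at h
  rw [h, Icc_sum_range, show n - 1 + 1 - 1 = n - 1 from by omega, add_comm (G 0)]
  congr 1
  exact Finset.sum_congr rfl fun j _ => by rw [Nat.add_comm 1 j]

theorem mobius_recursion_arithmetic_r_ge_two
    (a d k q r : ℕ) (ha : 0 < a) (hd : 0 < d) (hk2 : 2 ≤ k) (hka : k ≤ a - 1)
    (hgcd : Nat.gcd a d = 1)
    (hqr : a = q * k + r) (hrk : r < k) (hr : 2 ≤ r)
    (S : Set ℤ)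
    (hS : S = {z : ℤ | ∃ c : Fin (k + 1) → ℕ,
      z = ∑ i, (c i : ℤ) * ((a : ℤ) + (i : ℕ) * (d : ℤ))})
    (x : ℤ)
    (hx : x ∉ ({0, (a : ℤ), (a : ℤ) + k * d, (a : ℤ) + ((a : ℤ) + k * d)} : Set ℤ)) :
    mobiusRed S x =
      mobiusRed S (x - (q + 1) * ((a : ℤ) + k * d)) +
        (∑ i ∈ Finset.Icc 1 (r - 1),
          mobiusRed S (x - ((a : ℤ) + (i : ℕ) * d) - (q + 1) * ((a : ℤ) + k * d))) +
        (∑ i ∈ Finset.Icc r (k - 1),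
          mobiusRed S (x - ((a : ℤ) + (i : ℕ) * d) - q * ((a : ℤ) + k * d))) -
        ∑ i ∈ Finset.Icc 1 (k - 1), mobiusRed S (x - ((a : ℤ) + (i : ℕ) * d)) := by
  classical
  have hk : 0 < k := by omega
  have hSg : SGood a d k S := by unfold SGood; exact hS
  set M : ℤ := (a:ℤ) + (k:ℤ) * (d:ℤ) with hM
  simp only [Set.mem_insert_iff, Set.mem_singleton_iff, not_or] at hx
  obtain ⟨hx0, hxa, hxM, hxaM⟩ := hx
  have hGx := G_eq ha hd hk hgcd hSg x
  have hGxM := G_eq ha hd hk hgcd hSg (x - M)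
  rw [if_neg hx0, if_neg hxa, sub_zero] at hGx
  rw [if_neg (show ¬(x - M = 0) from fun h => hxM (sub_eq_zero.mp h)),
    if_neg (show ¬(x - M = (a:ℤ)) from fun h => hxaM (sub_eq_iff_eq_add.mp h)),
    sub_zero] at hGxM
  -- telescoping
  have hshift2 : (∑ j ∈ Finset.range a, mobiusRed S (x - wj a d k (k + j)))
      = ∑ j ∈ Finset.range a, mobiusRed S ((x - M) - wj a d k j) := by
    refine Finset.sum_congr rfl fun j _ => ?_
    rw [Nat.add_comm k j, w_add a d k hk j, ← hM]
    have h : (x - M) - wj a d k j = x - (wj a d k j + M) := by ring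
    rw [h]
  have hsum2 : (∑ j ∈ Finset.range a, mobiusRed S (x - wj a d k (k + j))) = 0 := by
    rw [hshift2, hGxM]
  have t2 : (∑ j ∈ Finset.range (a + k), mobiusRed S (x - wj a d k j))
      = (∑ j ∈ Finset.range a, mobiusRed S (x - wj a d k j))
        + ∑ j ∈ Finset.range k, mobiusRed S (x - wj a d k (a + j)) :=
    Finset.sum_range_add (fun j => mobiusRed S (x - wj a d k j)) a k
  have t3 : (∑ j ∈ Finset.range (a + k), mobiusRed S (x - wj a d k j))
      = (∑ j ∈ Finset.range k, mobiusRed S (x - wj a d k j))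
        + ∑ j ∈ Finset.range a, mobiusRed S (x - wj a d k (k + j)) := by
    rw [show a + k = k + a from Nat.add_comm a k]
    exact Finset.sum_range_add (fun j => mobiusRed S (x - wj a d k j)) k a
  have hEq : (∑ j ∈ Finset.range k, mobiusRed S (x - wj a d k j))
      = ∑ j ∈ Finset.range k, mobiusRed S (x - wj a d k (a + j)) := by
    linarith [t2, t3, hsum2, hGx]
  -- expand the first range-k sum
  have hE1 : (∑ j ∈ Finset.range k, mobiusRed S (x - wj a d k j))
      = mobiusRed S (x - wj a d k 0)
        + ∑ i ∈ Finset.Icc 1 (k-1), mobiusRed S (x - wj a d k i) :=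
    sum_split_first k (by omega) _
  rw [w_zero a d k hk, sub_zero] at hE1
  have hE1' : (∑ i ∈ Finset.Icc 1 (k-1), mobiusRed S (x - wj a d k i))
      = ∑ i ∈ Finset.Icc 1 (k-1), mobiusRed S (x - ((a:ℤ) + (i:ℤ) * (d:ℤ))) := by
    refine Finset.sum_congr rfl fun i hi => ?_
    rw [Finset.mem_Icc] at hi
    rw [w_small a d k hk hi.1 (by omega)]
  rw [hE1'] at hE1
  -- expand the second range-k sum
  have hsplit : (∑ j ∈ Finset.range k, mobiusRed S (x - wj a d k (a + j)))
      = (∑ j ∈ Finset.range (k - r), mobiusRed S (x - wj a d k (a + j)))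
        + ∑ j ∈ Finset.range r, mobiusRed S (x - wj a d k (a + ((k - r) + j))) := by
    have h := Finset.sum_range_add (fun j => mobiusRed S (x - wj a d k (a + j))) (k - r) r
    rw [show k - r + r = k from by omega] at h
    exact h
  have hp1 : (∑ j ∈ Finset.range (k - r), mobiusRed S (x - wj a d k (a + j)))
      = ∑ i ∈ Finset.Icc r (k-1), mobiusRed S (x - ((a:ℤ) + (i:ℤ)*(d:ℤ)) - (q:ℤ) * M) := by
    have hIcc := Icc_sum_range
      (fun i => mobiusRed S (x - ((a:ℤ) + (i:ℤ)*(d:ℤ)) - (q:ℤ) * M)) r (k-1)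
    rw [show k - 1 + 1 - r = k - r from by omega] at hIcc
    rw [hIcc]
    refine Finset.sum_congr rfl fun j hj => ?_
    rw [Finset.mem_range] at hj
    have hidx : a + j = q * k + (r + j) := by rw [hqr, Nat.add_assoc]
    rw [hidx, w_val a d hk q (r + j) (by omega) (by omega)]
    congr 1
    rw [hM]
    push_cast
    ring
  have hp2 : (∑ j ∈ Finset.range r, mobiusRed S (x - wj a d k (a + ((k - r) + j))))
      = mobiusRed S (x - ((q:ℤ) + 1) * M)
        + ∑ i ∈ Finset.Icc 1 (r-1), mobiusRed S (x - ((a:ℤ) + (i:ℤ)*(d:ℤ)) - ((q:ℤ)+1) * M) := by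
    have hsp : (∑ j ∈ Finset.range r, mobiusRed S (x - wj a d k (a + ((k - r) + j))))
        = mobiusRed S (x - wj a d k (a + ((k - r) + 0)))
          + ∑ i ∈ Finset.Icc 1 (r-1), mobiusRed S (x - wj a d k (a + ((k - r) + i))) :=
      sum_split_first r (by omega) _
    rw [hsp]
    congr 1
    · have hidx : a + ((k - r) + 0) = q * k + k := by
        rw [Nat.add_zero, hqr, Nat.add_assoc, Nat.add_sub_cancel' (le_of_lt hrk)]
      rw [hidx, w_val a d hk q k (by omega) (le_refl k)]
      congr 1
      rw [hM]
      push_cast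
      ring
    · refine Finset.sum_congr rfl fun i hi => ?_
      rw [Finset.mem_Icc] at hi
      have hidx : a + ((k - r) + i) = (q + 1) * k + i := by
        rw [hqr, Nat.add_mul, one_mul, Nat.add_assoc, Nat.add_assoc]
        congr 1
        omega
      rw [hidx, w_val a d hk (q + 1) i hi.1 (by omega)]
      congr 1
      rw [hM]
      push_cast
      ring
  rw [hE1, hsplit, hp1, hp2] at hEq
  push_cast
  linarith [hEq]
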